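/- arXiv:2307.16141 — 4 statements merged into one kernel-verified Lean document; each statement's English description precedes it below -/
import Mathlib

section
/- Let m ≥ 1, let f : ℝᵐ → ℝ be any function, let x⁰ ∈ ℝᵐ, let ζ > 0, γ ∈ ℝᵐ and w ∈ ℝ, and define f′(x) = f(x) + w·ReLU(ζ + γᵀ(x − x⁰)) − 2w·ReLU(γᵀ(x − x⁰)) + w·ReLU(−ζ + γᵀ(x − x⁰)). Then for every x ∈ ℝᵐ with |γᵀ(x − x⁰)| ≥ ζ one has f′(x) = f(x); that is, the cramming augmentation leaves the network output unchanged at every such input. -/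
open scoped RealInnerProductSpace

/-- The triangular bump of half-width `ζ` centred at `0`, built from three ReLUs. -/
noncomputable def reluHat (ζ t : ℝ) : ℝ :=
  max 0 (ζ + t) - 2 * max 0 t + max 0 (-ζ + t)

-- Beyond the band all three ReLUs are in the same (linear or zero) regime, and the
-- weights `1, -2, 1` cancel both the slopes and the offsets `±ζ`.
theorem reluHat_eq_zero_of_le_abs {ζ t : ℝ} (hζ : 0 ≤ ζ) (ht : ζ ≤ |t|) : reluHat ζ t = 0 := by
  unfold reluHat
  rcases le_abs'.mp ht with h | h
  · rw [max_eq_left (by linarith), max_eq_left (by linarith), max_eq_left (by linarith)]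
    ring
  · rw [max_eq_right (by linarith), max_eq_right (by linarith), max_eq_right (by linarith)]
    ring

theorem cramming_unchanged_outside_band_general (m : ℕ)
    (f : EuclideanSpace ℝ (Fin m) → ℝ)
    (x0 : EuclideanSpace ℝ (Fin m))
    (ζ : ℝ) (hζ : 0 < ζ) (γ : EuclideanSpace ℝ (Fin m)) (w : ℝ)
    (f' : EuclideanSpace ℝ (Fin m) → ℝ)
    (hf' : f' = fun x => f x + w * max 0 (ζ + ⟪γ, x - x0⟫)
        - 2 * w * max 0 (⟪γ, x - x0⟫)
        + w * max 0 (-ζ + ⟪γ, x - x0⟫)) :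
    ∀ x : EuclideanSpace ℝ (Fin m), ζ ≤ |⟪γ, x - x0⟫| → f' x = f x := by
  intro x hx
  have hf'x : f' x = f x + w * reluHat ζ ⟪γ, x - x0⟫ := by
    rw [hf', reluHat]
    ring
  rw [hf'x, reluHat_eq_zero_of_le_abs hζ.le hx, mul_zero, add_zero]

/-- The cramming augmentation
f′(x) = f(x) + w·ReLU(ζ + γᵀ(x − x⁰)) − 2w·ReLU(γᵀ(x − x⁰)) + w·ReLU(−ζ + γᵀ(x − x⁰))
leaves the output unchanged at every x with |γᵀ(x − x⁰)| ≥ ζ. -/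
theorem cramming_unchanged_outside_band (m : ℕ) (hm : 1 ≤ m)
    (f : EuclideanSpace ℝ (Fin m) → ℝ)
    (x0 : EuclideanSpace ℝ (Fin m))
    (ζ : ℝ) (hζ : 0 < ζ) (γ : EuclideanSpace ℝ (Fin m)) (w : ℝ)
    (f' : EuclideanSpace ℝ (Fin m) → ℝ)
    (hf' : f' = fun x => f x + w * max 0 (ζ + ⟪γ, x - x0⟫)
        - 2 * w * max 0 (⟪γ, x - x0⟫)
        + w * max 0 (-ζ + ⟪γ, x - x0⟫)) :
    ∀ x : EuclideanSpace ℝ (Fin m), ζ ≤ |⟪γ, x - x0⟫| → f' x = f x :=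
  cramming_unchanged_outside_band_general m f x0 ζ hζ γ w f' hf'
end

section
/- Cramming correctness: let m ≥ 1, ε ≥ 0, let I be a finite index set, and for each c ∈ I let (xᶜ, yᶜ) ∈ ℝᵐ × ℝ be a training instance. Let [n] ∈ I, let f : ℝᵐ → ℝ satisfy |f(xᶜ) − yᶜ| ≤ ε for every c ∈ I with c ≠ [n], and suppose ζ > 0 and γ ∈ ℝᵐ satisfy |γᵀ(xᶜ − x^[n])| > ζ for every c ∈ I with c ≠ [n]. Set w = (y^[n] − f(x^[n]))/ζ and f′(x) = f(x) + w·ReLU(ζ + γᵀ(x − x^[n])) − 2w·ReLU(γᵀ(x − x^[n])) + w·ReLU(−ζ + γᵀ(x − x^[n])). Then |f′(xᶜ) − yᶜ| ≤ ε for every c ∈ I, and moreover f′(x^[n]) = y^[n]. -/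
/-!
The three ReLU units add `w` times the triangular bump `t ↦ max 0 (ζ - |t|)` of `t = ⟪γ, z - x⁽ⁿ⁾⟫`.
The bump has height `ζ` at `x⁽ⁿ⁾`, which the choice of `w` turns into the missing residual, and it
vanishes wherever `ζ ≤ |t|`, so by the separation hypothesis on `γ` every other instance keeps its
old value.
-/

open scoped RealInnerProductSpace

noncomputable section

def reluBump (ζ t : ℝ) : ℝ :=
  max 0 (ζ + t) - 2 * max 0 t + max 0 (-ζ + t)

theorem reluBump_zero {ζ : ℝ} (hζ : 0 ≤ ζ) : reluBump ζ 0 = ζ := by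
  simp only [reluBump, add_zero, max_eq_right hζ, max_self,
    max_eq_left (neg_nonpos.mpr hζ)]
  ring

theorem reluBump_eq_zero_of_le_abs {ζ t : ℝ} (hζ : 0 ≤ ζ) (ht : ζ ≤ |t|) :
    reluBump ζ t = 0 := by
  rcases le_abs'.mp ht with h | h
  · rw [reluBump, max_eq_left (by linarith), max_eq_left (by linarith),
      max_eq_left (by linarith)]
    ring
  · rw [reluBump, max_eq_right (by linarith), max_eq_right (by linarith),
      max_eq_right (by linarith)]
    ring

section Cramming

variable {E : Type*} [NormedAddCommGroup E] [InnerProductSpace ℝ E]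

def cramming (f : E → ℝ) (x₀ γ : E) (ζ w : ℝ) (z : E) : ℝ :=
  f z + w * reluBump ζ ⟪γ, z - x₀⟫

theorem cramming_apply_self (f : E → ℝ) {x₀ : E} (γ : E) {ζ : ℝ} (hζ : 0 < ζ) (y₀ : ℝ) :
    cramming f x₀ γ ζ ((y₀ - f x₀) / ζ) x₀ = y₀ := by
  rw [cramming, sub_self, inner_zero_right, reluBump_zero hζ.le]
  field_simp
  ring

theorem cramming_apply_of_le_abs (f : E → ℝ) {x₀ γ z : E} {ζ : ℝ} (w : ℝ) (hζ : 0 ≤ ζ)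
    (hz : ζ ≤ |⟪γ, z - x₀⟫|) : cramming f x₀ γ ζ w z = f z := by
  rw [cramming, reluBump_eq_zero_of_le_abs hζ hz, mul_zero, add_zero]

end Cramming

end

theorem cramming_correctness_general {ι : Type*} (m : ℕ)
    (ε : ℝ) (hε : 0 ≤ ε) (I : Finset ι)
    (x : ι → EuclideanSpace ℝ (Fin m)) (y : ι → ℝ)
    (n : ι)
    (f : EuclideanSpace ℝ (Fin m) → ℝ)
    (hf : ∀ c ∈ I, c ≠ n → |f (x c) - y c| ≤ ε)
    (ζ : ℝ) (hζ : 0 < ζ) (γ : EuclideanSpace ℝ (Fin m))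
    (hγ : ∀ c ∈ I, c ≠ n → ζ < |⟪γ, x c - x n⟫|)
    (w : ℝ) (hw : w = (y n - f (x n)) / ζ)
    (f' : EuclideanSpace ℝ (Fin m) → ℝ)
    (hf' : f' = fun z => f z + w * max 0 (ζ + ⟪γ, z - x n⟫)
        - 2 * w * max 0 (⟪γ, z - x n⟫)
        + w * max 0 (-ζ + ⟪γ, z - x n⟫)) :
    (∀ c ∈ I, |f' (x c) - y c| ≤ ε) ∧ f' (x n) = y n := by
  have hf'_eq : f' = cramming f (x n) γ ζ w := by
    subst hf'
    funext z
    simp only [cramming, reluBump]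
    ring
  have hfit : f' (x n) = y n := by
    rw [hf'_eq, hw]
    exact cramming_apply_self f γ hζ (y n)
  refine ⟨fun c hc => ?_, hfit⟩
  by_cases hcn : c = n
  · simpa [hcn, hfit] using hε
  · rw [hf'_eq, cramming_apply_of_le_abs f w hζ.le (hγ c hc hcn).le]
    exact hf c hc hcn

/-- Cramming correctness: if f makes every instance of I except [n]
acceptable (|f(xᶜ) − yᶜ| ≤ ε), and ζ > 0, γ satisfy |γᵀ(xᶜ − x^[n])| > ζ for all
c ∈ I, c ≠ [n], then with w = (y^[n] − f(x^[n]))/ζ the crammed function f′ makes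
every instance of I acceptable, and fits the [n]-th instance exactly. -/
theorem cramming_correctness {ι : Type*} (m : ℕ) (hm : 1 ≤ m)
    (ε : ℝ) (hε : 0 ≤ ε) (I : Finset ι)
    (x : ι → EuclideanSpace ℝ (Fin m)) (y : ι → ℝ)
    (n : ι) (hn : n ∈ I)
    (f : EuclideanSpace ℝ (Fin m) → ℝ)
    (hf : ∀ c ∈ I, c ≠ n → |f (x c) - y c| ≤ ε)
    (ζ : ℝ) (hζ : 0 < ζ) (γ : EuclideanSpace ℝ (Fin m))
    (hγ : ∀ c ∈ I, c ≠ n → ζ < |⟪γ, x c - x n⟫|)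
    (w : ℝ) (hw : w = (y n - f (x n)) / ζ)
    (f' : EuclideanSpace ℝ (Fin m) → ℝ)
    (hf' : f' = fun z => f z + w * max 0 (ζ + ⟪γ, z - x n⟫)
        - 2 * w * max 0 (⟪γ, z - x n⟫)
        + w * max 0 (-ζ + ⟪γ, z - x n⟫)) :
    (∀ c ∈ I, |f' (x c) - y c| ≤ ε) ∧ f' (x n) = y n :=
  cramming_correctness_general m ε hε I x y n f hf ζ hζ γ hγ w hw f' hf'
end

section
/- Exact interpolation by one-hidden-layer ReLU networks (perfect learning): let m ≥ 1, let N ≥ 1, and let (x¹, y¹), …, (x^N, y^N) ∈ ℝᵐ × ℝ be training instances whose inputs x¹, …, x^N are pairwise distinct. Then there exist a number of hidden nodes p ∈ ℕ, output-layer parameters w₀ᵒ, w₁ᵒ, …, w_pᵒ ∈ ℝ, and hidden-layer parameters w_{i0}ᴴ ∈ ℝ and w_iᴴ ∈ ℝᵐ for i = 1, …, p, such that the network f(x) = w₀ᵒ + Σ_{i=1}^{p} w_iᵒ · ReLU(w_{i0}ᴴ + (w_iᴴ)ᵀ x) satisfies f(xᶜ) = yᶜ exactly for every c = 1, …, N.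 -/
/-!
Project the inputs onto a direction `v` on which they stay pairwise distinct; such a `v` exists
because a real vector space is not a finite union of proper subspaces (here the hyperplanes
`(xᶜ - xᶜ')ᗮ`). On the line, interpolate the sorted values one at a time: a new node
`ReLU(t - s)` with threshold `s` between the previous points and the next one vanishes on the
points already fitted, and its output weight is chosen to fit the next point.
-/

open scoped RealInnerProductSpace

theorem exists_relu_interpolation_real (Y : ℝ → ℝ) (T : Finset ℝ) :
    ∃ (p : ℕ) (w0 : ℝ) (a r : Fin p → ℝ),
      ∀ t ∈ T, w0 + ∑ i, a i * max 0 (t - r i) = Y t := by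
  induction T using Finset.induction_on_max with
  | empty => exact ⟨0, 0, ![], ![], by simp⟩
  | insert u T hlt ih =>
    obtain ⟨p, w0, a, r, hfit⟩ := ih
    obtain ⟨s, hTs, hus⟩ := T.exists_between' {u} (by simpa using hlt)
    have hsu : s < u := hus u (Finset.mem_singleton_self u)
    refine ⟨p + 1, w0,
      Fin.cons ((Y u - (w0 + ∑ i, a i * max 0 (u - r i))) / (u - s)) a, Fin.cons s r, ?_⟩
    intro t ht
    simp only [Fin.sum_univ_succ, Fin.cons_zero, Fin.cons_succ]
    rcases Finset.mem_insert.1 ht with rfl | ht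
    · rw [max_eq_right (sub_nonneg.2 hsu.le), div_mul_cancel₀ _ (sub_ne_zero.2 hsu.ne')]
      ring
    · rw [max_eq_left (sub_nonpos.2 (hTs t ht).le), mul_zero, zero_add, hfit t ht]

theorem exists_injective_inner {ι E : Type*} [Finite ι] [NormedAddCommGroup E]
    [InnerProductSpace ℝ E] {x : ι → E} (hx : Function.Injective x) :
    ∃ v : E, Function.Injective fun c ↦ ⟪v, x c⟫ := by
  by_contra! hnone
  have hcover : ⋃ q : {q : ι × ι // q.1 ≠ q.2}, ((ℝ ∙ (x q.1.1 - x q.1.2))ᗮ : Set E) =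
      Set.univ := by
    refine Set.eq_univ_of_forall fun v ↦ ?_
    obtain ⟨c, c', hcc', hne⟩ := Function.not_injective_iff.1 (hnone v)
    refine Set.mem_iUnion.2 ⟨⟨(c, c'), hne⟩, ?_⟩
    rw [SetLike.mem_coe, Submodule.mem_orthogonal_singleton_iff_inner_right, inner_sub_left,
      real_inner_comm, hcc', real_inner_comm, sub_self]
  obtain ⟨⟨⟨c, c'⟩, hne⟩, htop⟩ := Subspace.exists_eq_top_of_iUnion_eq_univ hcover
  rw [Submodule.orthogonal_eq_top_iff, Submodule.span_singleton_eq_bot, sub_eq_zero] at htop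
  exact hne (hx htop)

theorem exists_relu_interpolation {ι E : Type*} [Finite ι] [NormedAddCommGroup E]
    [InnerProductSpace ℝ E] {x : ι → E} (hx : Function.Injective x) (y : ι → ℝ) :
    ∃ (p : ℕ) (w0 : ℝ) (wo : Fin p → ℝ) (bH : Fin p → ℝ) (wH : Fin p → E),
      ∀ c, w0 + ∑ i, wo i * max 0 (bH i + ⟪wH i, x c⟫) = y c := by
  obtain ⟨v, hv⟩ := exists_injective_inner hx
  set t : ι → ℝ := fun c ↦ ⟪v, x c⟫
  obtain ⟨p, w0, a, r, hfit⟩ :=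
    exists_relu_interpolation_real (Function.extend t y 0) (Set.finite_range t).toFinset
  refine ⟨p, w0, a, -r, fun _ ↦ v, fun c ↦ ?_⟩
  simpa only [Pi.neg_apply, neg_add_eq_sub, hv.extend_apply] using
    hfit (t c) ((Set.finite_range t).mem_toFinset.2 (Set.mem_range_self c))

theorem relu_network_exact_interpolation_general (m N : ℕ)
    (x : Fin N → EuclideanSpace ℝ (Fin m)) (y : Fin N → ℝ)
    (hx : ∀ c c' : Fin N, c ≠ c' → x c ≠ x c') :
    ∃ (p : ℕ) (w0 : ℝ) (wo : Fin p → ℝ) (bH : Fin p → ℝ)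
      (wH : Fin p → EuclideanSpace ℝ (Fin m)),
      ∀ c : Fin N, w0 + ∑ i, wo i * max 0 (bH i + ⟪wH i, x c⟫) = y c :=
  exists_relu_interpolation (fun c c' h ↦ by_contra fun hne ↦ hx c c' hne h) y

/-- Perfect learning / exact interpolation: for any training
instances (x¹, y¹), …, (x^N, y^N) with pairwise distinct inputs, there exists a
one-hidden-layer ReLU network f(x) = w₀ᵒ + Σᵢ wᵢᵒ · ReLU(w_{i0}ᴴ + (wᵢᴴ)ᵀx)
interpolating all instances exactly. -/
theorem relu_network_exact_interpolation (m N : ℕ) (hm : 1 ≤ m) (hN : 1 ≤ N)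
    (x : Fin N → EuclideanSpace ℝ (Fin m)) (y : Fin N → ℝ)
    (hx : ∀ c c' : Fin N, c ≠ c' → x c ≠ x c') :
    ∃ (p : ℕ) (w0 : ℝ) (wo : Fin p → ℝ) (bH : Fin p → ℝ)
      (wH : Fin p → EuclideanSpace ℝ (Fin m)),
      ∀ c : Fin N, w0 + ∑ i, wo i * max 0 (bH i + ⟪wH i, x c⟫) = y c :=
  relu_network_exact_interpolation_general m N x y hx
end

section
/- Inductive step of the pupil learning mechanism (Lemma 1 invariant): let m ≥ 1 and ε ≥ 0, let (x¹, y¹), …, (x^k, y^k) ∈ ℝᵐ × ℝ, and let f be a one-hidden-layer ReLU network with p hidden nodes satisfying |f(xᶜ) − yᶜ| ≤ ε for all c = 1, …, k. Let (x⁰, y⁰) ∈ ℝᵐ × ℝ be a new instance with x⁰ ≠ xᶜ for all c. Then there exists a one-hidden-layer ReLU network f′ with p + 3 hidden nodes, agreeing with f in its first p hidden nodes and output bias, such that |f′(xᶜ) − yᶜ| ≤ ε for all c = 1, …, k and f′(x⁰) = y⁰. Consequently, given the new instance, the maximal absolute residual D over all k + 1 instances can be made to satisfy D ≤ ε by adding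 three hidden nodes. -/
/-!
A new input `x⁰`, distinct from the old ones, is separated from all of them by a margin `ζ > 0`
along a suitable direction `γ`. Three ReLU nodes with input direction `γ` combine to the tent
`t ↦ w · (ReLU (t + ζ) - 2 ReLU t + ReLU (t - ζ))` of `t = ⟪γ, z - x⁰⟫`, which vanishes for
`|t| ≥ ζ` and equals `w ζ` at `t = 0`. Adding it leaves the old outputs unchanged, and the choice
`w = (y⁰ - f x⁰) / ζ` corrects the output at `x⁰`.
-/

open Filter Topology
open scoped RealInnerProductSpace

lemma exists_pos_forall_le_of_forall_pos {ι : Type*} [Finite ι] {a : ι → ℝ}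
    (ha : ∀ i, 0 < a i) : ∃ δ > 0, ∀ i, δ ≤ a i :=
  (Eventually.and (self_mem_nhdsWithin : ∀ᶠ δ in 𝓝[>] (0 : ℝ), 0 < δ)
    (eventually_all.2 fun i => nhdsWithin_le_nhds (eventually_le_nhds (ha i)))).exists

def tent (ζ t : ℝ) : ℝ :=
  max 0 (t + ζ) - 2 * max 0 t + max 0 (t - ζ)

lemma tent_eq_zero_of_le_abs {ζ t : ℝ} (hζ : 0 ≤ ζ) (ht : ζ ≤ |t|) : tent ζ t = 0 := by
  unfold tent
  rcases le_abs.mp ht with h | h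
  · rw [max_eq_right (by linarith), max_eq_right (by linarith), max_eq_right (by linarith)]
    ring
  · rw [max_eq_left (by linarith), max_eq_left (by linarith), max_eq_left (by linarith)]
    ring

lemma tent_zero {ζ : ℝ} (hζ : 0 ≤ ζ) : tent ζ 0 = ζ := by
  simp [tent, hζ]

section InnerProductSpace

variable {E : Type*} [NormedAddCommGroup E] [InnerProductSpace ℝ E]

lemma exists_inner_ne_zero_of_forall_ne_zero {ι : Type*} [Finite ι] {v : ι → E}
    (hv : ∀ i, v i ≠ 0) : ∃ γ : E, ∀ i, ⟪γ, v i⟫ ≠ 0 := by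
  obtain ⟨γ, hγ⟩ := Module.Dual.exists_forall_ne_zero_of_forall_exists
    (fun i => innerₛₗ ℝ (v i)) fun i => ⟨v i, by simpa using hv i⟩
  exact ⟨γ, fun i => by simpa [real_inner_comm] using hγ i⟩

def reluNet {ι : Type*} [Fintype ι] (w0 : ℝ) (wo bH : ι → ℝ) (wH : ι → E) (z : E) : ℝ :=
  w0 + ∑ i, wo i * max 0 (bH i + ⟪wH i, z⟫)

lemma reluNet_append {p q : ℕ} (w0 : ℝ) (wo bH : Fin p → ℝ) (wH : Fin p → E)
    (wo' bH' : Fin q → ℝ) (wH' : Fin q → E) (z : E) :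
    reluNet w0 (Fin.append wo wo') (Fin.append bH bH') (Fin.append wH wH') z =
      reluNet w0 wo bH wH z + reluNet 0 wo' bH' wH' z := by
  simp only [reluNet, Fin.sum_univ_add, Fin.append_left, Fin.append_right]
  ring

lemma reluNet_tent (w ζ : ℝ) (γ x0 z : E) :
    reluNet 0 ![w, -(2 * w), w] ![ζ - ⟪γ, x0⟫, -⟪γ, x0⟫, -ζ - ⟪γ, x0⟫] ![γ, γ, γ] z =
      w * tent ζ ⟪γ, z - x0⟫ := by
  simp only [reluNet, tent, Fin.sum_univ_three, inner_sub_right, Matrix.cons_val_zero,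
    Matrix.cons_val_one, Matrix.cons_val_two, Matrix.head_cons, Matrix.tail_cons]
  set a := ⟪γ, x0⟫
  set b := ⟪γ, z⟫
  rw [show ζ - a + b = b - a + ζ by ring, show -a + b = b - a by ring,
    show -ζ - a + b = b - a - ζ by ring]
  ring

end InnerProductSpace

theorem plm_inductive_step_general (m k p : ℕ) (ε : ℝ)
    (x : Fin k → EuclideanSpace ℝ (Fin m)) (y : Fin k → ℝ)
    (w0 : ℝ) (wo : Fin p → ℝ) (bH : Fin p → ℝ)
    (wH : Fin p → EuclideanSpace ℝ (Fin m))
    (f : EuclideanSpace ℝ (Fin m) → ℝ)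
    (hf : f = fun z => w0 + ∑ i, wo i * max 0 (bH i + ⟪wH i, z⟫))
    (hfit : ∀ c, |f (x c) - y c| ≤ ε)
    (x0 : EuclideanSpace ℝ (Fin m)) (y0 : ℝ) (hx0 : ∀ c, x0 ≠ x c) :
    ∃ (wo' : Fin (p + 3) → ℝ) (bH' : Fin (p + 3) → ℝ)
      (wH' : Fin (p + 3) → EuclideanSpace ℝ (Fin m)),
      (∀ i : Fin p, wo' (Fin.castAdd 3 i) = wo i ∧
        bH' (Fin.castAdd 3 i) = bH i ∧ wH' (Fin.castAdd 3 i) = wH i) ∧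
      (∀ c, |(w0 + ∑ i, wo' i * max 0 (bH' i + ⟪wH' i, x c⟫)) - y c| ≤ ε) ∧
      (w0 + ∑ i, wo' i * max 0 (bH' i + ⟪wH' i, x0⟫)) = y0 := by
  obtain ⟨γ, hγ⟩ := exists_inner_ne_zero_of_forall_ne_zero fun c => sub_ne_zero.2 (hx0 c).symm
  obtain ⟨ζ, hζ, hζle⟩ := exists_pos_forall_le_of_forall_pos fun c => abs_pos.2 (hγ c)
  have hf' : f = reluNet w0 wo bH wH := hf
  set w := (y0 - f x0) / ζ
  refine ⟨Fin.append wo ![w, -(2 * w), w],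
    Fin.append bH ![ζ - ⟪γ, x0⟫, -⟪γ, x0⟫, -ζ - ⟪γ, x0⟫], Fin.append wH ![γ, γ, γ],
    fun i => by simp, fun c => ?_, ?_⟩
  · change |reluNet w0 _ _ _ (x c) - y c| ≤ ε
    rw [reluNet_append, reluNet_tent, tent_eq_zero_of_le_abs hζ.le (hζle c), mul_zero,
      add_zero, ← hf']
    exact hfit c
  · change reluNet w0 _ _ _ x0 = y0
    rw [reluNet_append, reluNet_tent, sub_self, inner_zero_right, tent_zero hζ.le, ← hf',
      div_mul_cancel₀ _ hζ.ne']
    ring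

/-- Inductive step of the PLM, Lemma 1 invariant: if a 2LNN with p
hidden nodes makes all k instances acceptable (residual at most ε) and (x⁰, y⁰)
is a new instance with x⁰ distinct from all xᶜ, then there is a 2LNN with p + 3
hidden nodes, agreeing with f in its first p hidden nodes and output bias, that
keeps all k instances acceptable and fits (x⁰, y⁰) exactly. -/
theorem plm_inductive_step (m k p : ℕ) (hm : 1 ≤ m) (ε : ℝ) (hε : 0 ≤ ε)
    (x : Fin k → EuclideanSpace ℝ (Fin m)) (y : Fin k → ℝ)
    (w0 : ℝ) (wo : Fin p → ℝ) (bH : Fin p → ℝ)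
    (wH : Fin p → EuclideanSpace ℝ (Fin m))
    (f : EuclideanSpace ℝ (Fin m) → ℝ)
    (hf : f = fun z => w0 + ∑ i, wo i * max 0 (bH i + ⟪wH i, z⟫))
    (hfit : ∀ c, |f (x c) - y c| ≤ ε)
    (x0 : EuclideanSpace ℝ (Fin m)) (y0 : ℝ) (hx0 : ∀ c, x0 ≠ x c) :
    ∃ (wo' : Fin (p + 3) → ℝ) (bH' : Fin (p + 3) → ℝ)
      (wH' : Fin (p + 3) → EuclideanSpace ℝ (Fin m)),
      (∀ i : Fin p, wo' (Fin.castAdd 3 i) = wo i ∧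
        bH' (Fin.castAdd 3 i) = bH i ∧ wH' (Fin.castAdd 3 i) = wH i) ∧
      (∀ c, |(w0 + ∑ i, wo' i * max 0 (bH' i + ⟪wH' i, x c⟫)) - y c| ≤ ε) ∧
      (w0 + ∑ i, wo' i * max 0 (bH' i + ⟪wH' i, x0⟫)) = y0 :=
  plm_inductive_step_general m k p ε x y w0 wo bH wH f hf hfit x0 y0 hx0
end
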